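/- Main theorem: If σ = (1, λ_2, ..., λ_n) is a list of real numbers with λ_j ≤ 0 for j = 2, ..., n and 1 + λ_2 + ... + λ_n ≥ 1/2, then there exists a symmetric doubly stochastic n×n matrix whose spectrum (with multiplicity) is exactly σ. -/

import Mathlib

/-! The Hartley matrix `H = (cas (2πjk/n))`, `cas = cos + sin`, satisfies `Hᵀ H = n • 1` and its
column `0` is all ones. Hence `A = n⁻¹ • H diag(λ) Hᵀ` is symmetric with spectrum `λ` and row sums
`λ₀ = 1`. Since `cas² ≤ 2`, any product of two entries of `H` is at most `2`, so
`n A_kl = 1 + ∑_{j ≠ 0} λ_j H_kj H_lj ≥ 1 + 2 ∑_{j ≠ 0} λ_j ≥ 0`: this is where the bound `1/2`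
comes from. -/

open Matrix Finset Polynomial Real

theorem Complex.sum_range_exp_two_pi_mul_I {n : ℕ} (hn : n ≠ 0) (m : ℤ) :
    ∑ k ∈ range n, Complex.exp (2 * π * Complex.I * m * k / n) =
      if (n : ℤ) ∣ m then (n : ℂ) else 0 := by
  have hζ := Complex.isPrimitiveRoot_exp n hn
  set ζ := Complex.exp (2 * π * Complex.I / n)
  have hpow (k : ℕ) : Complex.exp (2 * π * Complex.I * m * k / n) = (ζ ^ m) ^ k := by
    rw [← Complex.exp_int_mul, ← Complex.exp_nat_mul]
    ring_nf
  simp only [hpow]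
  split_ifs with hdvd
  · simp [(hζ.zpow_eq_one_iff_dvd m).2 hdvd]
  · have hne : ζ ^ m - 1 ≠ 0 := sub_ne_zero.2 fun h => hdvd ((hζ.zpow_eq_one_iff_dvd m).1 h)
    have hroot : (ζ ^ m) ^ n = 1 := by
      rw [← zpow_natCast, ← _root_.zpow_mul, mul_comm, _root_.zpow_mul, zpow_natCast,
        hζ.pow_eq_one, _root_.one_zpow]
    apply mul_right_cancel₀ hne
    rw [geom_sum_mul, hroot, sub_self, zero_mul]

theorem sum_range_cos_two_pi_mul {n : ℕ} (hn : n ≠ 0) (m : ℤ) :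
    ∑ k ∈ range n, cos (2 * π * m * k / n) = if (n : ℤ) ∣ m then (n : ℝ) else 0 := by
  have h := congrArg Complex.re (Complex.sum_range_exp_two_pi_mul_I hn m)
  rw [Complex.re_sum] at h
  convert h using 2 with k _
  · rw [← Complex.exp_ofReal_mul_I_re]; push_cast; ring_nf
  · split_ifs <;> simp

theorem sum_range_sin_two_pi_mul {n : ℕ} (hn : n ≠ 0) (m : ℤ) :
    ∑ k ∈ range n, sin (2 * π * m * k / n) = 0 := by
  have h := congrArg Complex.im (Complex.sum_range_exp_two_pi_mul_I hn m)
  rw [Complex.im_sum] at h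
  convert h using 2 with k _
  · rw [← Complex.exp_ofReal_mul_I_im]; push_cast; ring_nf
  · split_ifs <;> simp

noncomputable def cas (x : ℝ) : ℝ := cos x + sin x

theorem cas_mul_cas (x y : ℝ) : cas x * cas y = cos (x - y) + sin (x + y) := by
  rw [cas, cas, cos_sub, sin_add]; ring

theorem cas_sq_le_two (x : ℝ) : cas x ^ 2 ≤ 2 := by
  rw [cas]
  nlinarith [sin_sq_add_cos_sq x, sq_nonneg (cos x - sin x)]

theorem cas_mul_cas_le_two (x y : ℝ) : cas x * cas y ≤ 2 := by
  nlinarith [two_mul_le_add_sq (cas x) (cas y), cas_sq_le_two x, cas_sq_le_two y]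

noncomputable def hartley (n : ℕ) : Matrix (Fin n) (Fin n) ℝ :=
  of fun j k => cas (2 * π * j * k / n)

theorem hartley_apply_mk_zero {n : ℕ} (hn : 0 < n) (k : Fin n) : hartley n k ⟨0, hn⟩ = 1 := by
  simp [hartley, cas]

theorem hartley_transpose_mul_self {n : ℕ} (hn : n ≠ 0) :
    (hartley n)ᵀ * hartley n = (n : ℝ) • 1 := by
  ext j l
  have hdvd : (n : ℤ) ∣ (j - l : ℤ) ↔ j = l := by
    refine ⟨fun h => Fin.ext ?_, fun h => by simp [h]⟩
    have := Int.eq_zero_of_abs_lt_dvd h (by rw [abs_lt]; omega)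
    omega
  calc ((hartley n)ᵀ * hartley n) j l
      = ∑ k ∈ range n, (cos (2 * π * ((j - l : ℤ) : ℝ) * k / n)
          + sin (2 * π * ((j + l : ℕ) : ℤ) * k / n)) := by
        simp only [mul_apply, transpose_apply, hartley, of_apply]
        rw [Fin.sum_univ_eq_sum_range (fun k => cas (2 * π * k * j / n) * cas (2 * π * k * l / n))]
        refine sum_congr rfl fun k _ => ?_
        rw [cas_mul_cas]; push_cast; ring_nf
    _ = ((n : ℝ) • (1 : Matrix (Fin n) (Fin n) ℝ)) j l := by
        rw [sum_add_distrib, sum_range_cos_two_pi_mul hn, sum_range_sin_two_pi_mul hn, add_zero]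
        simp [one_apply, hdvd]

section OrthogonalConjugation

variable {ι : Type*} [Fintype ι] [DecidableEq ι]

theorem charpoly_smul_mul_diagonal_mul_transpose {Q : Matrix ι ι ℝ} {c : ℝ} (hc : c ≠ 0)
    (hQ : Qᵀ * Q = c • 1) (d : ι → ℝ) :
    (c⁻¹ • (Q * diagonal d * Qᵀ)).charpoly = ∏ i, (X - C (d i)) := by
  have hinv : (c⁻¹ • Qᵀ) * Q = 1 := by rw [smul_mul, hQ, smul_smul, inv_mul_cancel₀ hc, one_smul]
  rw [← Matrix.mul_smul, Matrix.mul_assoc, charpoly_mul_comm, Matrix.mul_assoc, hinv,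
    Matrix.mul_one, charpoly_diagonal]

theorem sum_smul_mul_diagonal_mul_transpose_apply {Q : Matrix ι ι ℝ} {c : ℝ} (hc : c ≠ 0)
    (hQ : Qᵀ * Q = c • 1) {i₀ : ι} (hcol : ∀ k, Q k i₀ = 1) (d : ι → ℝ) (k : ι) :
    ∑ l, (c⁻¹ • (Q * diagonal d * Qᵀ)) k l = d i₀ := by
  suffices (c⁻¹ • (Q * diagonal d * Qᵀ)) *ᵥ 1 = d i₀ • 1 by
    simpa [mulVec, dotProduct] using congrFun this k
  have hone : Q *ᵥ Pi.single i₀ 1 = 1 := by ext k; simp [hcol]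
  have hQt : Qᵀ *ᵥ 1 = c • Pi.single i₀ 1 := by
    rw [← hone, mulVec_mulVec, hQ, smul_mulVec, one_mulVec]
  rw [smul_mulVec, ← mulVec_mulVec, ← mulVec_mulVec, hQt, mulVec_smul, mulVec_smul,
    diagonal_mulVec_single, mul_one, smul_smul, inv_mul_cancel₀ hc, one_smul]
  ext k
  simp [hcol]

theorem mul_diagonal_mul_transpose_apply_nonneg {Q : Matrix ι ι ℝ} {i₀ : ι}
    (hcol : ∀ k, Q k i₀ = 1) (hbound : ∀ k l j, Q k j * Q l j ≤ 2)
    {d : ι → ℝ} (hd₀ : d i₀ = 1) (hneg : ∀ j, j ≠ i₀ → d j ≤ 0) (hsum : 1 / 2 ≤ ∑ j, d j)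
    (k l : ι) : 0 ≤ (Q * diagonal d * Qᵀ) k l := by
  have hrest : ∑ j ∈ univ.erase i₀, 2 * d j ≤ ∑ j ∈ univ.erase i₀, Q k j * d j * Q l j := by
    refine sum_le_sum fun j hj => ?_
    nlinarith [mul_le_mul_of_nonpos_left (hbound k l j) (hneg j (ne_of_mem_erase hj))]
  have hsplit := add_sum_erase univ d (mem_univ i₀)
  rw [← mul_sum] at hrest
  rw [mul_apply, ← add_sum_erase _ _ (mem_univ i₀)]
  simp only [mul_diagonal, transpose_apply, hcol, hd₀]
  linarith

end OrthogonalConjugation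

theorem stmt_12 (n : ℕ) (hn : 1 ≤ n)
    (lam : Fin n → ℝ) (hlam0 : lam ⟨0, by omega⟩ = 1)
    (hneg : ∀ j : Fin n, j ≠ ⟨0, by omega⟩ → lam j ≤ 0)
    (hsum : ∑ j : Fin n, lam j ≥ 1 / 2) :
    ∃ A : Matrix (Fin n) (Fin n) ℝ,
      Aᵀ = A ∧
      (∀ k l : Fin n, 0 ≤ A k l) ∧
      (∀ k : Fin n, ∑ l : Fin n, A k l = 1) ∧
      (∀ l : Fin n, ∑ k : Fin n, A k l = 1) ∧
      A.charpoly = ∏ i : Fin n, (Polynomial.X - Polynomial.C (lam i)) := by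
  have hn₀ : n ≠ 0 := by omega
  have hc : (n : ℝ) ≠ 0 := Nat.cast_ne_zero.2 hn₀
  have hQ := hartley_transpose_mul_self hn₀
  have hcol := hartley_apply_mk_zero (Nat.pos_of_ne_zero hn₀)
  set A := (n : ℝ)⁻¹ • (hartley n * diagonal lam * (hartley n)ᵀ) with hA
  have hsymm : Aᵀ = A := by simp [hA, transpose_mul, Matrix.mul_assoc]
  have hrow (k : Fin n) : ∑ l, A k l = 1 :=
    hlam0 ▸ sum_smul_mul_diagonal_mul_transpose_apply hc hQ hcol lam k
  refine ⟨A, hsymm, fun k l => ?_, hrow, fun l => ?_,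
    charpoly_smul_mul_diagonal_mul_transpose hc hQ lam⟩
  · rw [hA, Matrix.smul_apply]
    exact smul_nonneg (by positivity) <| mul_diagonal_mul_transpose_apply_nonneg hcol
      (fun _ _ _ => cas_mul_cas_le_two _ _) hlam0 hneg hsum k l
  · have := hrow l
    rw [← hsymm] at this
    simpa only [transpose_apply] using this
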